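/- arXiv:1102.1312 — 3 statements merged into one kernel-verified Lean document; each statement's English description precedes it below -/
import Mathlib

section
/- For all integers a, b ≥ 0 and every integer r with 1 ≤ r ≤ a+b+1: Σ C(2r, 2α+2) − Σ' C(2r, 2β+2) + 𝟙(b ≥ r) − 𝟙(a ≥ r) = C(2r, 2a+2), where the first sum Σ is over all integers α, β ≥ 0 with α+β+1 = r, α ≤ a and β ≤ b, the second sum Σ' is over all integers α, β ≥ 0 with α+β+1 = r, α ≤ a and β ≤ b−1, and 𝟙 denotes the indicator function (equal to 1 if the condition holds and 0 otherwise). -/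
/-!
Reindex both sums by `α ∈ [0, r)`, and use `C(2r, 2β+2) = C(2r, 2α)` for `β = r - 1 - α`.
With `g α = [α ≤ a, r ≤ b + α] C(2r, 2α)`, the `α`-th term of the first sum is `g (α+1)`,
except for an extra `C(2r, 2a+2)` at `α = a`, so the difference of the sums telescopes to
`C(2r, 2a+2) + g r - g 0 = C(2r, 2a+2) + [r ≤ a] - [r ≤ b]`.
-/

open Finset

theorem sum_filter_antidiagonal_eq_sum_range {M : Type*} [AddCommMonoid M] (n : ℕ)
    (P : ℕ × ℕ → Prop) [DecidablePred P] (f : ℕ × ℕ → M) :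
    ∑ p ∈ (antidiagonal n).filter P, f p =
      ∑ i ∈ range (n + 1), if P (i, n - i) then f (i, n - i) else 0 := by
  rw [sum_filter, Nat.sum_antidiagonal_eq_sum_range_succ_mk]

theorem sum_range_ite_succ_sub_sum_range_ite {M : Type*} [AddCommGroup M] (f : ℕ → M)
    {n a b : ℕ} (h : n ≤ a + b) :
    ∑ i ∈ range (n + 1), (if i ≤ a ∧ n ≤ b + i then f (i + 1) else 0) -
        ∑ i ∈ range (n + 1), (if i ≤ a ∧ n < b + i then f i else 0) =
      (if a ≤ n then f (a + 1) else 0) + (if n + 1 ≤ a then f (n + 1) else 0) -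
        (if n + 1 ≤ b then f 0 else 0) := by
  set g : ℕ → M := fun i => if i ≤ a ∧ n < b + i then f i else 0 with hg
  have hterm : ∀ i ∈ range (n + 1), (if i ≤ a ∧ n ≤ b + i then f (i + 1) else 0) =
      g (i + 1) + if i = a then f (a + 1) else 0 := by
    intro i _
    rcases lt_trichotomy i a with hia | rfl | hai
    · have hcond : (i ≤ a ∧ n ≤ b + i) ↔ (i + 1 ≤ a ∧ n < b + (i + 1)) := by omega
      simp only [hg, hcond, hia.ne, if_false, add_zero]
    · simp only [hg, show n ≤ b + i by omega, and_true, le_refl, if_true,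
        show ¬ i + 1 ≤ i by omega, false_and, if_false, zero_add]
    · simp only [hg, show ¬ i ≤ a by omega, show ¬ i + 1 ≤ a by omega, hai.ne', false_and,
        if_false, add_zero]
  have hg_top : g (n + 1) = if n + 1 ≤ a then f (n + 1) else 0 := by
    simp only [hg, show n < b + (n + 1) by omega, and_true]
  have hg_zero : g 0 = if n + 1 ≤ b then f 0 else 0 := by
    simp only [hg, Nat.zero_le, true_and, add_zero, Nat.lt_iff_add_one_le]
  rw [sum_congr rfl hterm, sum_add_distrib, sum_ite_eq', add_sub_right_comm, ← sum_sub_distrib,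
    sum_range_sub, hg_top, hg_zero]
  simp only [mem_range, Nat.lt_succ_iff]
  abel

theorem sum_filter_antidiagonal_choose_fst (n a b : ℕ) :
    ∑ p ∈ (antidiagonal n).filter (fun p => p.1 ≤ a ∧ p.2 ≤ b),
        ((2 * (n + 1)).choose (2 * p.1 + 2) : ℤ) =
      ∑ i ∈ range (n + 1),
        if i ≤ a ∧ n ≤ b + i then ((2 * (n + 1)).choose (2 * (i + 1)) : ℤ) else 0 := by
  rw [sum_filter_antidiagonal_eq_sum_range]
  refine sum_congr rfl fun i _ => ?_
  have hcond : (i ≤ a ∧ n - i ≤ b) ↔ (i ≤ a ∧ n ≤ b + i) := by omega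
  simp only [hcond, mul_add, mul_one]

theorem sum_filter_antidiagonal_choose_snd (n a b : ℕ) :
    ∑ p ∈ (antidiagonal n).filter (fun p => p.1 ≤ a ∧ p.2 < b),
        ((2 * (n + 1)).choose (2 * p.2 + 2) : ℤ) =
      ∑ i ∈ range (n + 1),
        if i ≤ a ∧ n < b + i then ((2 * (n + 1)).choose (2 * i) : ℤ) else 0 := by
  rw [sum_filter_antidiagonal_eq_sum_range]
  refine sum_congr rfl fun i hi => ?_
  have hi : i ≤ n := Nat.lt_succ_iff.mp (mem_range.mp hi)
  have hcond : (i ≤ a ∧ n - i < b) ↔ (i ≤ a ∧ n < b + i) := by omega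
  have hsymm : (2 * (n + 1)).choose (2 * (n - i) + 2) = (2 * (n + 1)).choose (2 * i) := by
    rw [show 2 * (n - i) + 2 = 2 * (n + 1) - 2 * i by omega, Nat.choose_symm (by omega)]
  simp only [hcond, hsymm]

/-- Compatibility identity for the coefficients `A^r_{a,b} = C(2r, 2a+2)`:
`Σ C(2r,2α+2) − Σ' C(2r,2β+2) + 𝟙(b ≥ r) − 𝟙(a ≥ r) = C(2r,2a+2)`,
where both sums are over `α+β+1 = r` with `α ≤ a`, and `β ≤ b` (resp. `β ≤ b−1`). -/
theorem A_compatibility (a b r : ℕ) (h1 : 1 ≤ r) (h2 : r ≤ a + b + 1) :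
    (∑ p ∈ (Finset.HasAntidiagonal.antidiagonal (r - 1)).filter (fun p => p.1 ≤ a ∧ p.2 ≤ b),
        ((2 * r).choose (2 * p.1 + 2) : ℤ)) -
      (∑ p ∈ (Finset.HasAntidiagonal.antidiagonal (r - 1)).filter (fun p => p.1 ≤ a ∧ p.2 < b),
        ((2 * r).choose (2 * p.2 + 2) : ℤ)) +
      (if r ≤ b then (1 : ℤ) else 0) - (if r ≤ a then (1 : ℤ) else 0) =
      ((2 * r).choose (2 * a + 2) : ℤ) := by
  obtain ⟨n, rfl⟩ : ∃ n, r = n + 1 := ⟨r - 1, by omega⟩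
  have htop : (if a ≤ n then ((2 * (n + 1)).choose (2 * (a + 1)) : ℤ) else 0) =
      (2 * (n + 1)).choose (2 * a + 2) := by
    split_ifs with ha
    · rfl
    · rw [Nat.choose_eq_zero_of_lt (by omega), Nat.cast_zero]
  rw [Nat.add_sub_cancel, sum_filter_antidiagonal_choose_fst, sum_filter_antidiagonal_choose_snd,
    sum_range_ite_succ_sub_sum_range_ite (fun k => ((2 * (n + 1)).choose (2 * k) : ℤ)) (by omega),
    htop]
  simp only [Nat.choose_self, Nat.mul_zero, Nat.choose_zero_right, Nat.cast_one]
  abel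
end

section
/- For all integers a, b ≥ 0 with n = a+b+1, the rational numbers c_{a,b} and c_{0,a+b} are nonzero and their 2-adic valuations satisfy v_2(c_{0,a+b}) ≤ v_2(c_{a,b}) ≤ 0. -/
/-- The coefficient `c_{a,b} = 2(−1)^n (C(2n,2a+2) − (1−2^{−2n}) C(2n,2b+1))`
with `n = a+b+1`, appearing in Zagier's evaluation of `ζ(2^{a},3,2^{b})`. -/
noncomputable def zagierCoeff (a b : ℕ) : ℚ :=
  2 * (-1) ^ (a + b + 1) *
    (((2 * (a + b + 1)).choose (2 * a + 2) : ℚ) -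
      (1 - (2 : ℚ) ^ (-(2 * (a + b + 1) : ℤ))) * ((2 * (a + b + 1)).choose (2 * b + 1) : ℚ))

/-!
Write `n = a + b + 1`, `A = C(2n, 2a+2)` and `B = C(2n, 2b+1)`. Then
`c_{a,b} = ±2 (B / 2^{2n} + (A - B))`, and since `0 < B < 2^{2n}` the term `B / 2^{2n}` has
negative 2-adic valuation, so it dominates the integer `A - B`: `c_{a,b} ≠ 0` and
`v₂(c_{a,b}) = 1 + v₂(B) - 2n ≤ 0`. For `c_{0,a+b}` the binomial is `C(2n, 2n-1) = 2n`, and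
`v₂(2n) ≤ v₂(B)` because `2n` divides `(2b+1) B` with `2b+1` odd.
-/

namespace padicValRat

theorem add_ne_zero_of_lt {p : ℕ} {q r : ℚ} (hval : padicValRat p q < padicValRat p r) :
    q + r ≠ 0 := by
  intro h
  rw [eq_neg_of_add_eq_zero_right h, padicValRat.neg] at hval
  exact lt_irrefl _ hval

theorem add_eq_left_of_lt {p : ℕ} [Fact p.Prime] {q r : ℚ} (hq : q ≠ 0)
    (hval : padicValRat p q < padicValRat p r) : padicValRat p (q + r) = padicValRat p q := by
  rcases eq_or_ne r 0 with rfl | hr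
  · rw [add_zero]
  · exact add_eq_of_lt (add_ne_zero_of_lt hval) hq hr hval

theorem neg_one_pow_mul (p n : ℕ) (q : ℚ) : padicValRat p ((-1) ^ n * q) = padicValRat p q := by
  rcases n.even_or_odd with hn | hn
  · rw [hn.neg_one_pow, one_mul]
  · rw [hn.neg_one_pow, neg_one_mul, padicValRat.neg]

variable {p : ℕ} [hp : Fact p.Prime] {m k : ℕ}

theorem natCast_div_prime_pow (hm : m ≠ 0) (k : ℕ) :
    padicValRat p (m / (p : ℚ) ^ k) = padicValNat p m - k := by
  have hp0 : (p : ℚ) ≠ 0 := Nat.cast_ne_zero.mpr hp.out.ne_zero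
  rw [padicValRat.div (Nat.cast_ne_zero.mpr hm) (pow_ne_zero k hp0), padicValRat.of_nat,
    padicValRat.pow, padicValRat.self hp.out.one_lt, mul_one]

theorem natCast_div_prime_pow_lt_intCast (hm : m ≠ 0) (hmk : padicValNat p m < k) (z : ℤ) :
    padicValRat p (m / (p : ℚ) ^ k) < padicValRat p z := by
  rw [natCast_div_prime_pow hm, padicValRat.of_int]
  omega

theorem natCast_div_prime_pow_add_intCast_ne_zero (hm : m ≠ 0) (hmk : padicValNat p m < k)
    (z : ℤ) : (m / (p : ℚ) ^ k + z) ≠ 0 :=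
  add_ne_zero_of_lt (natCast_div_prime_pow_lt_intCast hm hmk z)

theorem natCast_div_prime_pow_add_intCast (hm : m ≠ 0) (hmk : padicValNat p m < k) (z : ℤ) :
    padicValRat p (m / (p : ℚ) ^ k + z) = padicValNat p m - k := by
  have hq : (m / (p : ℚ) ^ k) ≠ 0 := by simp [hm, hp.out.ne_zero]
  rw [add_eq_left_of_lt hq (natCast_div_prime_pow_lt_intCast hm hmk z), natCast_div_prime_pow hm]

end padicValRat

theorem padicValNat_two_choose_lt {n : ℕ} (hn : n ≠ 0) (k : ℕ) :
    padicValNat 2 (n.choose k) < n :=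
  (padicValNat_le_nat_log _).trans_lt
    (Nat.log_lt_of_lt_pow' hn (Nat.choose_lt_two_pow n k (Nat.pos_of_ne_zero hn)))

theorem padicValNat_le_padicValNat_choose {p n k : ℕ} [hp : Fact p.Prime] (hkn : k ≤ n)
    (hpk : ¬ p ∣ k) : padicValNat p n ≤ padicValNat p (n.choose k) := by
  obtain ⟨j, rfl⟩ := Nat.exists_eq_add_one_of_ne_zero (show k ≠ 0 by rintro rfl; simp at hpk)
  obtain ⟨m, rfl⟩ := Nat.exists_eq_add_of_le' hkn
  have hdvd : m + j + 1 ∣ (m + j + 1).choose (j + 1) * (j + 1) :=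
    ⟨_, (Nat.add_one_mul_choose_eq (m + j) j).symm⟩
  have hcop : Nat.Coprime (p ^ padicValNat p (m + j + 1)) (j + 1) :=
    ((Nat.Prime.coprime_iff_not_dvd hp.out).mpr hpk).pow_left _
  rw [← padicValNat_dvd_iff_le (Nat.choose_pos hkn).ne']
  exact hcop.dvd_of_dvd_mul_right (pow_padicValNat_dvd.trans hdvd)

theorem zagierCoeff_eq (a b : ℕ) :
    zagierCoeff a b = (-1) ^ (a + b + 1) * (2 *
      (((2 * (a + b + 1)).choose (2 * b + 1) : ℚ) / (2 : ℕ) ^ (2 * (a + b + 1)) +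
        (((2 * (a + b + 1)).choose (2 * a + 2) : ℤ) -
          (2 * (a + b + 1)).choose (2 * b + 1) : ℤ))) := by
  have hexp : (2 * (a + b + 1) : ℤ) = ((2 * (a + b + 1) : ℕ) : ℤ) := by push_cast; ring
  rw [zagierCoeff, zpow_neg, hexp, zpow_natCast]
  push_cast
  ring

theorem zagierCoeff_ne_zero (a b : ℕ) : zagierCoeff a b ≠ 0 := by
  rw [zagierCoeff_eq]
  exact mul_ne_zero (pow_ne_zero _ (by norm_num)) <| mul_ne_zero two_ne_zero <|
    padicValRat.natCast_div_prime_pow_add_intCast_ne_zero (Nat.choose_pos (by omega)).ne'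
      (padicValNat_two_choose_lt (by omega) _) _

theorem padicValRat_two_zagierCoeff (a b : ℕ) :
    padicValRat 2 (zagierCoeff a b) =
      1 + padicValNat 2 ((2 * (a + b + 1)).choose (2 * b + 1)) - 2 * (a + b + 1 : ℕ) := by
  have hB : (2 * (a + b + 1)).choose (2 * b + 1) ≠ 0 := (Nat.choose_pos (by omega)).ne'
  have hlt := padicValNat_two_choose_lt (n := 2 * (a + b + 1)) (by omega) (2 * b + 1)
  rw [zagierCoeff_eq, padicValRat.neg_one_pow_mul,
    padicValRat.mul two_ne_zero (padicValRat.natCast_div_prime_pow_add_intCast_ne_zero hB hlt _),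
    padicValRat.natCast_div_prime_pow_add_intCast hB hlt]
  have h2 : padicValRat 2 2 = 1 := by simpa using padicValRat.self (p := 2) one_lt_two
  rw [h2]
  push_cast
  ring

/-- `c_{a,b}` and `c_{0,a+b}` are nonzero and `v₂(c_{0,a+b}) ≤ v₂(c_{a,b}) ≤ 0`. -/
theorem zagierCoeff_two_adic_bounds (a b : ℕ) :
    zagierCoeff a b ≠ 0 ∧ zagierCoeff 0 (a + b) ≠ 0 ∧
      padicValRat 2 (zagierCoeff 0 (a + b)) ≤ padicValRat 2 (zagierCoeff a b) ∧
      padicValRat 2 (zagierCoeff a b) ≤ 0 := by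
  have hchoose : (2 * (0 + (a + b) + 1)).choose (2 * (a + b) + 1) = 2 * (a + b + 1) := by
    rw [show 2 * (0 + (a + b) + 1) = 2 * (a + b) + 1 + 1 by omega, Nat.choose_succ_self_right]
    ring
  have hmono := padicValNat_le_padicValNat_choose (p := 2) (n := 2 * (a + b + 1))
    (k := 2 * b + 1) (by omega) (by omega)
  have hlt := padicValNat_two_choose_lt (n := 2 * (a + b + 1)) (by omega) (2 * b + 1)
  refine ⟨zagierCoeff_ne_zero a b, zagierCoeff_ne_zero 0 (a + b), ?_, ?_⟩
  · rw [padicValRat_two_zagierCoeff, padicValRat_two_zagierCoeff, hchoose]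
    omega
  · rw [padicValRat_two_zagierCoeff]
    omega
end

section
/- Let p be a prime number and let A = (a_{ij}) be an n×n matrix with rational entries such that: (i) v_p(a_{ij}) ≥ 1 for all i > j, and (ii) for every j, v_p(a_{jj}) = min_i v_p(a_{ij}) ≤ 0. Then A is invertible, i.e. det(A) ≠ 0. (Indeed, v_p(det A) = Σ_{j=1}^n v_p(a_{jj}).) -/
/-!
Expand `det A = ∑_σ sign σ ∏_j a_{σ(j) j}` and measure every term with the `p`-adic norm.
Every entry of a column is at most its diagonal entry in norm, and strictly less below the
diagonal (`|a_{ij}|_p < 1 ≤ |a_{jj}|_p`). A permutation `σ ≠ 1` moves some `j` strictly down,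
so its term has norm `< ∏_j |a_{jj}|_p`, the norm of the diagonal term. By the ultrametric
inequality the diagonal term dominates the sum: `|det A|_p = ∏_j |a_{jj}|_p ≠ 0`.
-/

open Finset

theorem Equiv.Perm.eq_one_of_forall_apply_le {ι : Type*} [LinearOrder ι] [WellFoundedLT ι]
    {σ : Equiv.Perm ι} (h : ∀ i, σ i ≤ i) : σ = 1 := by
  ext i
  induction i using WellFoundedLT.induction with
  | _ i ih =>
    exact (h i).eq_or_lt.resolve_right fun hlt => hlt.ne (σ.injective (ih _ hlt))

theorem Equiv.Perm.exists_lt_apply_of_ne_one {ι : Type*} [LinearOrder ι] [WellFoundedLT ι]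
    {σ : Equiv.Perm ι} (hσ : σ ≠ 1) : ∃ i, i < σ i := by
  by_contra! h
  exact hσ (eq_one_of_forall_apply_le h)

theorem Finset.prod_zpow_eq_zpow_sum₀ {ι G₀ : Type*} [CommGroupWithZero G₀] {a : G₀} (ha : a ≠ 0)
    (s : Finset ι) (f : ι → ℤ) : ∏ i ∈ s, a ^ f i = a ^ ∑ i ∈ s, f i := by
  induction s using Finset.cons_induction with
  | empty => simp
  | cons i s hi ih => rw [prod_cons, sum_cons, ih, zpow_add₀ ha]

theorem Finset.prod_lt_prod_of_nonneg {ι : Type*} {s : Finset ι} {f g : ι → ℝ}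
    (hf : ∀ i ∈ s, 0 ≤ f i) (hg : ∀ i ∈ s, 0 < g i) (hfg : ∀ i ∈ s, f i ≤ g i)
    (hlt : ∃ i ∈ s, f i < g i) : ∏ i ∈ s, f i < ∏ i ∈ s, g i := by
  by_cases hpos : ∀ i ∈ s, 0 < f i
  · exact prod_lt_prod hpos hfg hlt
  · push Not at hpos
    obtain ⟨i, hi, hfi⟩ := hpos
    rw [prod_eq_zero hi (le_antisymm hfi (hf i hi))]
    exact prod_pos hg

theorem IsUltrametricDist.norm_sum_eq_of_forall_norm_lt {M ι : Type*} [SeminormedAddCommGroup M]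
    [IsUltrametricDist M] {s : Finset ι} {f : ι → M} {a : ι} (ha : a ∈ s)
    (h : ∀ b ∈ s, b ≠ a → ‖f b‖ < ‖f a‖) : ‖∑ b ∈ s, f b‖ = ‖f a‖ := by
  classical
  rw [← add_sum_erase s f ha]
  rcases (s.erase a).eq_empty_or_nonempty with hempty | hne
  · simp [hempty]
  have hrest : ‖∑ b ∈ s.erase a, f b‖ < ‖f a‖ :=
    (hne.norm_sum_le_sup'_norm f).trans_lt <| (sup'_lt_iff hne).2 fun b hb =>
      h b (mem_of_mem_erase hb) (ne_of_mem_erase hb)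
  rw [norm_add_eq_max_of_norm_ne_norm hrest.ne', max_eq_left hrest.le]

theorem Matrix.norm_det_eq_prod_diag_of_diag_dominant {K ι : Type*} [NormedField K]
    [IsUltrametricDist K] [Fintype ι] [LinearOrder ι] {A : Matrix ι ι K}
    (hle : ∀ i j, ‖A i j‖ ≤ ‖A j j‖) (hlt : ∀ i j, j < i → ‖A i j‖ < ‖A j j‖) :
    ‖A.det‖ = ∏ j, ‖A j j‖ := by
  by_cases hzero : ∃ j, A j j = 0
  · obtain ⟨j, hj⟩ := hzero
    have hcol : ∀ i, A i j = 0 := fun i => norm_le_zero_iff.1 (by simpa [hj] using hle i j)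
    rw [det_eq_zero_of_column_eq_zero j hcol, prod_eq_zero (mem_univ j) (by simp [hj]), norm_zero]
  push Not at hzero
  have hterm (σ : Equiv.Perm ι) :
      ‖(Equiv.Perm.sign σ : K) * ∏ i, A (σ i) i‖ = ∏ i, ‖A (σ i) i‖ := by
    rcases Int.units_eq_one_or (Equiv.Perm.sign σ) with h | h <;> simp [h, norm_prod]
  rw [det_apply', IsUltrametricDist.norm_sum_eq_of_forall_norm_lt (mem_univ 1), hterm]
  · rfl
  intro σ _ hσ
  obtain ⟨j, hj⟩ := σ.exists_lt_apply_of_ne_one hσ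
  rw [hterm, hterm]
  exact prod_lt_prod_of_nonneg (fun _ _ => norm_nonneg _)
    (fun i _ => norm_pos_iff.2 (hzero i)) (fun i _ => hle _ _) ⟨j, mem_univ j, hlt _ _ hj⟩

namespace Padic

variable {p : ℕ} [Fact p.Prime]

theorem norm_ratCast_eq_zpow {q : ℚ} (hq : q ≠ 0) :
    ‖(q : ℚ_[p])‖ = (p : ℝ) ^ (-padicValRat p q) := by
  rw [norm_eq_zpow_neg_valuation (Rat.cast_ne_zero.2 hq), valuation_ratCast]

theorem norm_ratCast_le_norm_ratCast {x y : ℚ} (hy : y ≠ 0)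
    (h : x = 0 ∨ padicValRat p y ≤ padicValRat p x) : ‖(x : ℚ_[p])‖ ≤ ‖(y : ℚ_[p])‖ := by
  rcases eq_or_ne x 0 with rfl | hx
  · simpa using norm_nonneg (y : ℚ_[p])
  have hp : (1 : ℝ) < p := by exact_mod_cast (Fact.out : p.Prime).one_lt
  rw [norm_ratCast_eq_zpow hx, norm_ratCast_eq_zpow hy, zpow_le_zpow_iff_right₀ hp, neg_le_neg_iff]
  exact h.resolve_left hx

theorem norm_ratCast_lt_norm_ratCast {x y : ℚ} (hy : y ≠ 0)
    (h : x = 0 ∨ padicValRat p y < padicValRat p x) : ‖(x : ℚ_[p])‖ < ‖(y : ℚ_[p])‖ := by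
  rcases eq_or_ne x 0 with rfl | hx
  · simpa using norm_pos_iff.2 (Rat.cast_ne_zero.2 hy : (y : ℚ_[p]) ≠ 0)
  have hp : (1 : ℝ) < p := by exact_mod_cast (Fact.out : p.Prime).one_lt
  rw [norm_ratCast_eq_zpow hx, norm_ratCast_eq_zpow hy, zpow_lt_zpow_iff_right₀ hp, neg_lt_neg_iff]
  exact h.resolve_left hx

end Padic

/-- Let `p` be a prime and `A` an `n×n` rational matrix such that
(i) `v_p(a_{ij}) ≥ 1` for `i > j` (with the convention `v_p(0) = ∞`, i.e. zero
entries are allowed below the diagonal), and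
(ii) for every `j`, `v_p(a_{jj}) = min_i v_p(a_{ij}) ≤ 0` (in particular
`a_{jj} ≠ 0`, its valuation is `≤ 0`, and it minimizes the valuation in its column).
Then `A` is invertible, and `v_p(det A) = Σ_j v_p(a_{jj})`. -/
theorem det_ne_zero_of_p_adic_conditions (p : ℕ) (hp : p.Prime) (n : ℕ)
    (A : Matrix (Fin n) (Fin n) ℚ)
    (h1 : ∀ i j, j < i → A i j = 0 ∨ 1 ≤ padicValRat p (A i j))
    (h2 : ∀ j, A j j ≠ 0 ∧ padicValRat p (A j j) ≤ 0 ∧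
      ∀ i, A i j ≠ 0 → padicValRat p (A j j) ≤ padicValRat p (A i j)) :
    A.det ≠ 0 ∧ padicValRat p A.det = ∑ j, padicValRat p (A j j) := by
  have : Fact p.Prime := ⟨hp⟩
  have hnorm : ‖(A.det : ℚ_[p])‖ = ∏ j, ‖(A j j : ℚ_[p])‖ := by
    rw [← Rat.coe_castHom, RingHom.map_det]
    refine Matrix.norm_det_eq_prod_diag_of_diag_dominant (fun i j => ?_) (fun i j hij => ?_)
    · exact Padic.norm_ratCast_le_norm_ratCast (h2 j).1 (or_iff_not_imp_left.2 ((h2 j).2.2 i))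
    · exact Padic.norm_ratCast_lt_norm_ratCast (h2 j).1 <| (h1 i j hij).imp_right
        fun h => (h2 j).2.1.trans_lt (zero_lt_one.trans_le h)
  have hdet : A.det ≠ 0 := by
    rintro h
    rw [h, Rat.cast_zero, norm_zero] at hnorm
    exact prod_ne_zero_iff.2 (fun j _ => norm_ne_zero_iff.2 (Rat.cast_ne_zero.2 (h2 j).1))
      hnorm.symm
  refine ⟨hdet, ?_⟩
  have hp0 : (0 : ℝ) < p := by exact_mod_cast hp.pos
  rw [Padic.norm_ratCast_eq_zpow hdet,
    prod_congr rfl fun j _ => Padic.norm_ratCast_eq_zpow (h2 j).1, prod_zpow_eq_zpow_sum₀ hp0.ne',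
    sum_neg_distrib] at hnorm
  exact neg_injective (zpow_right_injective₀ hp0 (by exact_mod_cast hp.one_lt.ne') hnorm)
end
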